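/- arXiv:1101.5488 — 2 statements merged into one kernel-verified Lean document; each statement's English description precedes it below -/
import Mathlib

section
/- Let X be an E-valued random variable and Y a stationary quantizer of X, i.e. Y = E[X | Y]. If F : E → ℝ is differentiable with α-Hölder derivative DF (i.e. ‖DF(u) − DF(v)‖ ≤ [DF]_α |u − v|^α for all u, v), for some α ∈ (0,1], then |E[F(X)] − E[F(Y)]| ≤ [DF]_α · ‖X − Y‖₂^{1+α}. -/
/-!
The mean value inequality on the ball `closedBall y ‖x - y‖`, where
`‖DF z - DF y‖ ≤ C ‖x - y‖ ^ α`, gives the first-order Taylor bound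
`|F x - F y - DF y (x - y)| ≤ C ‖x - y‖ ^ (1 + α)`. Taking expectations at `(X, Y)`, the
linear term vanishes by stationarity: on each atom `{Y = y}` of the finite σ-algebra `σ(Y)` the
error `X - Y` has mean zero, and `DF(Y) = DF(y)` is constant there. The remaining term is at
most `C E‖X - Y‖ ^ (1 + α) ≤ C ‖X - Y‖₂ ^ (1 + α)` by Lyapunov's inequality, since
`1 + α ≤ 2`.
-/

open MeasureTheory
open scoped ENNReal NNReal

theorem norm_sub_sub_fderiv_le_of_holderWith {E G : Type*} [NormedAddCommGroup E]
    [NormedSpace ℝ E] [NormedAddCommGroup G] [NormedSpace ℝ G] {F : E → G}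
    (hF : Differentiable ℝ F) {C α : ℝ≥0} (hDF : HolderWith C α (fderiv ℝ F)) (x y : E) :
    ‖F x - F y - fderiv ℝ F y (x - y)‖ ≤ C * ‖x - y‖ ^ (1 + (α : ℝ)) := by
  have hx : x ∈ Metric.closedBall y ‖x - y‖ := by simp [dist_eq_norm]
  have hy : y ∈ Metric.closedBall y ‖x - y‖ := Metric.mem_closedBall_self (norm_nonneg _)
  have bound : ∀ z ∈ Metric.closedBall y ‖x - y‖,
      ‖fderiv ℝ F z - fderiv ℝ F y‖ ≤ C * ‖x - y‖ ^ (α : ℝ) := fun z hz => by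
    rw [← dist_eq_norm]
    exact (hDF.dist_le z y).trans <| by gcongr; exact Metric.mem_closedBall.mp hz
  calc ‖F x - F y - fderiv ℝ F y (x - y)‖
      ≤ C * ‖x - y‖ ^ (α : ℝ) * ‖x - y‖ :=
        (convex_closedBall y _).norm_image_sub_le_of_norm_hasFDerivWithin_le'
          (fun z _ => (hF z).hasFDerivAt.hasFDerivWithinAt) bound hy hx
    _ = C * ‖x - y‖ ^ (1 + (α : ℝ)) := by
        rw [Real.rpow_add' (norm_nonneg _) (by positivity), Real.rpow_one]
        ring

theorem comp_eq_sum_indicator_preimage {Ω α β : Type*} [AddCommMonoid β] {Y : Ω → α}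
    {S : Finset α} (hS : ∀ ω, Y ω ∈ S) (f : α → Ω → β) :
    (fun ω => f (Y ω) ω) = fun ω => ∑ y ∈ S, (Y ⁻¹' {y}).indicator (f y) ω := by
  ext ω
  rw [Finset.sum_eq_single_of_mem (Y ω) (hS ω)
    (fun y _ hy => Set.indicator_of_notMem (fun h => hy h.symm) _),
    Set.indicator_of_mem (show ω ∈ Y ⁻¹' {Y ω} from rfl)]

theorem integrable_apply_comp_of_finite_range {Ω α E G : Type*} [MeasurableSpace Ω]
    {μ : Measure Ω} [MeasurableSpace α] [MeasurableSingletonClass α]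
    [NormedAddCommGroup E] [NormedSpace ℝ E] [NormedAddCommGroup G] [NormedSpace ℝ G]
    {Y : Ω → α} (hY : Measurable Y) (hYfin : (Set.range Y).Finite) (L : α → E →L[ℝ] G)
    {Z : Ω → E} (hZ : Integrable Z μ) :
    Integrable (fun ω => L (Y ω) (Z ω)) μ := by
  rw [comp_eq_sum_indicator_preimage (fun ω => hYfin.mem_toFinset.mpr ⟨ω, rfl⟩)
    (fun y ω => L y (Z ω))]
  exact integrable_finsetSum _ fun y _ =>
    ((L y).integrable_comp hZ).indicator (hY (measurableSet_singleton y))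

section Stationarity

variable {Ω E : Type*} {m m₀ : MeasurableSpace Ω} {μ : Measure[m₀] Ω}
  [NormedAddCommGroup E] [NormedSpace ℝ E] [CompleteSpace E]

theorem setIntegral_sub_eq_zero_of_ae_eq_condExp (hm : m ≤ m₀) [SigmaFinite (μ.trim hm)]
    {X Y : Ω → E} (hX : Integrable X μ) (hstat : Y =ᵐ[μ] μ[X | m]) {s : Set Ω}
    (hs : MeasurableSet[m] s) :
    ∫ ω in s, X ω - Y ω ∂μ = 0 := by
  have hY : Integrable Y μ := integrable_condExp.congr hstat.symm
  rw [integral_sub hX.integrableOn hY.integrableOn, ← setIntegral_condExp hm hX hs,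
    setIntegral_congr_ae₀ (hm s hs).nullMeasurableSet (hstat.mono fun _ h _ => h), sub_self]

theorem integral_apply_comp_sub_eq_zero_of_stationary {G : Type*} [NormedAddCommGroup G]
    [NormedSpace ℝ G] [CompleteSpace G] [MeasurableSpace E] [MeasurableSingletonClass E]
    [IsFiniteMeasure μ] {X Y : Ω → E} (hX : Integrable X μ) (hY : Measurable Y)
    (hYfin : (Set.range Y).Finite)
    (hstat : Y =ᵐ[μ] μ[X | MeasurableSpace.comap Y inferInstance]) (L : E → E →L[ℝ] G) :
    ∫ ω, L (Y ω) (X ω - Y ω) ∂μ = 0 := by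
  have hZ : Integrable (fun ω => X ω - Y ω) μ := hX.sub (integrable_condExp.congr hstat.symm)
  have hpiece : ∀ y, Integrable ((Y ⁻¹' {y}).indicator fun ω => L y (X ω - Y ω)) μ :=
    fun y => ((L y).integrable_comp hZ).indicator (hY (measurableSet_singleton y))
  rw [comp_eq_sum_indicator_preimage (fun ω => hYfin.mem_toFinset.mpr ⟨ω, rfl⟩)
    (fun y ω => L y (X ω - Y ω)), integral_finsetSum _ fun y _ => hpiece y]
  refine Finset.sum_eq_zero fun y _ => ?_
  rw [integral_indicator (hY (measurableSet_singleton y)),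
    ContinuousLinearMap.integral_comp_comm _ hZ.integrableOn,
    setIntegral_sub_eq_zero_of_ae_eq_condExp hY.comap_le hX hstat
      ⟨{y}, measurableSet_singleton y, rfl⟩, map_zero]

end Stationarity

theorem integral_norm_rpow_le_eLpNorm_rpow {Ω E : Type*} [MeasurableSpace Ω] {μ : Measure Ω}
    [IsProbabilityMeasure μ] [NormedAddCommGroup E] {Z : Ω → E} {p : ℝ≥0} {q : ℝ≥0∞}
    (hp : p ≠ 0) (hpq : (p : ℝ≥0∞) ≤ q) (hZ : MemLp Z q μ) :
    ∫ ω, ‖Z ω‖ ^ (p : ℝ) ∂μ ≤ (eLpNorm Z q μ).toReal ^ (p : ℝ) := by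
  have hZp : MemLp Z p μ := hZ.mono_exponent hpq
  have hint_nonneg : 0 ≤ ∫ ω, ‖Z ω‖ ^ (p : ℝ) ∂μ := by positivity
  calc ∫ ω, ‖Z ω‖ ^ (p : ℝ) ∂μ = (eLpNorm Z p μ).toReal ^ (p : ℝ) := by
        rw [hZp.eLpNorm_eq_integral_rpow_norm (by simpa using hp) ENNReal.coe_ne_top,
          ENNReal.toReal_ofReal (by positivity), ENNReal.coe_toReal,
          Real.rpow_inv_rpow hint_nonneg (by simpa using hp)]
    _ ≤ (eLpNorm Z q μ).toReal ^ (p : ℝ) :=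
        Real.rpow_le_rpow ENNReal.toReal_nonneg (ENNReal.toReal_mono hZ.eLpNorm_ne_top
          (eLpNorm_le_eLpNorm_of_exponent_le hpq hZ.aestronglyMeasurable)) p.coe_nonneg

theorem stationary_quantizer_holder_derivative_error_bound_general
    {E : Type*} [NormedAddCommGroup E] [InnerProductSpace ℝ E]
    [CompleteSpace E] [MeasurableSpace E] [BorelSpace E]
    {Ω : Type*} [MeasureSpace Ω] [IsProbabilityMeasure (volume : Measure Ω)]
    (X Y : Ω → E) (hX : MemLp X 2 volume) (hY : MemLp Y 2 volume)
    (hYmeas : Measurable Y) (hYfin : (Set.range Y).Finite)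
    -- stationarity: `Y = E[X | σ(Y)]` almost surely
    (hstat : Y =ᵐ[volume]
      (volume : Measure Ω)[X | MeasurableSpace.comap Y inferInstance])
    (F : E → ℝ) (hFdiff : Differentiable ℝ F)
    (α : NNReal) (hα1 : (α : ℝ) ≤ 1)
    (C : NNReal) (hHolder : HolderWith C α (fderiv ℝ F))
    (hFX : Integrable (fun ω => F (X ω)) volume)
    (hFY : Integrable (fun ω => F (Y ω)) volume) :
    |(∫ ω, F (X ω)) - (∫ ω, F (Y ω))|
      ≤ (C : ℝ) *
        ((eLpNorm (fun ω => X ω - Y ω) 2 (volume : Measure Ω)).toReal) ^ (1 + (α : ℝ)) := by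
  have hZ : MemLp (fun ω => X ω - Y ω) 2 volume := hX.sub hY
  have hL : Integrable (fun ω => fderiv ℝ F (Y ω) (X ω - Y ω)) volume :=
    integrable_apply_comp_of_finite_range hYmeas hYfin _ (hZ.integrable one_le_two)
  have hp2 : ((1 + α : ℝ≥0) : ℝ≥0∞) ≤ 2 := by
    rw [← ENNReal.coe_ofNat, ENNReal.coe_le_coe, ← NNReal.coe_le_coe]
    push_cast
    linarith
  have hp : ((1 + α : ℝ≥0) : ℝ) = 1 + α := by push_cast; rfl
  calc |(∫ ω, F (X ω)) - (∫ ω, F (Y ω))|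
      = ‖∫ ω, F (X ω) - F (Y ω) - fderiv ℝ F (Y ω) (X ω - Y ω)‖ := by
        rw [integral_sub (f := fun ω => F (X ω) - F (Y ω)) (hFX.sub hFY) hL,
          integral_sub hFX hFY,
          integral_apply_comp_sub_eq_zero_of_stationary (hX.integrable one_le_two) hYmeas hYfin
            hstat, sub_zero, Real.norm_eq_abs]
    _ ≤ ∫ ω, (C : ℝ) * ‖X ω - Y ω‖ ^ (1 + (α : ℝ)) := by
        refine norm_integral_le_of_norm_le (Integrable.const_mul ?_ _)
          (ae_of_all _ fun ω => norm_sub_sub_fderiv_le_of_holderWith hFdiff hHolder _ _)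
        rw [← hp]
        exact (hZ.mono_exponent hp2).integrable_norm_rpow (by simp) ENNReal.coe_ne_top
    _ = C * ∫ ω, ‖X ω - Y ω‖ ^ (1 + (α : ℝ)) := integral_const_mul _ _
    _ ≤ C * ((eLpNorm (fun ω => X ω - Y ω) 2 volume).toReal) ^ (1 + (α : ℝ)) := by
        rw [← hp]
        gcongr
        exact integral_norm_rpow_le_eLpNorm_rpow (by positivity) hp2 hZ

/-- cubature error bound for a stationary quantizer `Y = E[X|Y]` and a
functional `F` with `α`-Hölder Fréchet derivative:
`|E[F(X)] − E[F(Y)]| ≤ [DF]_α ⬝ ‖X − Y‖₂^{1+α}`. -/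
theorem stationary_quantizer_holder_derivative_error_bound
    {E : Type*} [NormedAddCommGroup E] [InnerProductSpace ℝ E]
    [SecondCountableTopology E] [CompleteSpace E] [MeasurableSpace E] [BorelSpace E]
    {Ω : Type*} [MeasureSpace Ω] [IsProbabilityMeasure (volume : Measure Ω)]
    (X Y : Ω → E) (hX : MemLp X 2 volume) (hY : MemLp Y 2 volume)
    (hYmeas : Measurable Y) (hYfin : (Set.range Y).Finite)
    -- stationarity: `Y = E[X | σ(Y)]` almost surely
    (hstat : Y =ᵐ[volume]
      (volume : Measure Ω)[X | MeasurableSpace.comap Y inferInstance])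
    (F : E → ℝ) (hFdiff : Differentiable ℝ F)
    (α : NNReal) (hα0 : 0 < α) (hα1 : (α : ℝ) ≤ 1)
    (C : NNReal) (hHolder : HolderWith C α (fderiv ℝ F))
    (hFX : Integrable (fun ω => F (X ω)) volume)
    (hFY : Integrable (fun ω => F (Y ω)) volume) :
    |(∫ ω, F (X ω)) - (∫ ω, F (Y ω))|
      ≤ (C : ℝ) *
        ((eLpNorm (fun ω => X ω - Y ω) 2 (volume : Measure Ω)).toReal) ^ (1 + (α : ℝ)) :=
  stationary_quantizer_holder_derivative_error_bound_general X Y hX hY hYmeas hYfin hstat F hFdiff α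
    hα1 C hHolder hFX hFY
end

section
/- (Voronoi-cell conditioning preserves equivalence of measures.) With the setting of the previous theorem (hypothesis (H) holds), let Ẑ^Γ = Σ_{k=1}^N γ_k 𝟙_{C_k}(Z̄_T) be a Voronoi quantization of Z̄_T with cells C_1,…,C_N of positive P_{Z̄_T}-measure. Then for every s ∈ [0,T) and every k ∈ {1,…,N}, the conditional probability P[· | Ẑ^Γ = γ_k] is equivalent to P on F_s^X. -/
open MeasureTheory

/-- Voronoi-cell conditioning preserves equivalence of measures.
With `κ` a regular conditional probability for `Z = Z̄_T` given which, under
hypothesis (H), `κ z ∼ P` on `ms = F_s^X` for a.e. `z` (conclusion of the previous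
theorem), and Voronoi cells `C k` of positive mass, the conditional probability
`P[· | Ẑ^Γ = γ_k] ∝ P(· ∩ Z⁻¹(C k))` is equivalent to `P` on `ms`. -/
theorem voronoi_conditioning_equivalent
    {Ω : Type*} (ms : MeasurableSpace Ω) {mΩ : MeasurableSpace Ω} (P : Measure Ω) [IsProbabilityMeasure P]
    (hms : ms ≤ mΩ)
    {ι : Type*} [Fintype ι]
    (Z : Ω → (ι → ℝ)) (hZ : Measurable[mΩ] Z)
    (PZ : Measure (ι → ℝ)) (hPZ : PZ = @Measure.map Ω (ι → ℝ) mΩ _ Z P)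
    (κ : (ι → ℝ) → Measure Ω) [∀ z, IsProbabilityMeasure (κ z)]
    -- `κ` is a regular conditional probability given `Z`
    (hκ : ∀ A : Set Ω, MeasurableSet[mΩ] A → ∀ B : Set (ι → ℝ), MeasurableSet B →
      P (A ∩ Z ⁻¹' B) = ∫⁻ z in B, κ z A ∂PZ)
    -- under hypothesis (H): for a.e. `z`, `κ z ∼ P` on `ms`
    (hequiv : ∀ᵐ z ∂PZ, ∀ A : Set Ω, MeasurableSet[ms] A → (κ z A = 0 ↔ P A = 0))
    (N : ℕ) (C : Fin N → Set (ι → ℝ)) (hCmeas : ∀ k, MeasurableSet (C k))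
    (hCpos : ∀ k, 0 < PZ (C k)) :
    ∀ k : Fin N, ∀ A : Set Ω, MeasurableSet[ms] A →
      (P (A ∩ Z ⁻¹' (C k)) = 0 ↔ P A = 0) := by
  intro k A hA
  have hAm : MeasurableSet[mΩ] A := hms A hA
  have hint : P (A ∩ Z ⁻¹' (C k)) = ∫⁻ z in C k, κ z A ∂PZ :=
    hκ A hAm (C k) (hCmeas k)
  have hPZC : PZ (C k) = P (Z ⁻¹' (C k)) := by
    rw [hPZ, Measure.map_apply hZ (hCmeas k)]
  have hPZfin : PZ (C k) ≠ ⊤ := by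
    rw [hPZC]; exact measure_ne_top P _
  constructor
  · intro h0
    -- P(Aᶜ ∩ Z⁻¹ C) = PZ C
    have hsplit : P (A ∩ Z ⁻¹' (C k)) + P (Aᶜ ∩ Z ⁻¹' (C k)) = P (Z ⁻¹' (C k)) := by
      rw [Set.inter_comm A, Set.inter_comm Aᶜ, ← Set.diff_eq]
      exact measure_inter_add_diff (Z ⁻¹' (C k)) hAm
    have hcompl : ∫⁻ z in C k, κ z Aᶜ ∂PZ = PZ (C k) := by
      rw [← hκ Aᶜ hAm.compl (C k) (hCmeas k), hPZC, ← hsplit, h0, zero_add]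
    -- take a measurable minorant of z ↦ κ z Aᶜ with equal integral
    obtain ⟨g, hgm, hgle, hgeq⟩ :=
      exists_measurable_le_lintegral_eq (PZ.restrict (C k)) (fun z => κ z Aᶜ)
    have hg1 : ∀ z, g z ≤ 1 := fun z => (hgle z).trans prob_le_one
    have hgint : ∫⁻ z, g z ∂(PZ.restrict (C k)) = PZ (C k) := by
      rw [← hgeq, hcompl]
    -- ∫ (1 - g) = 0 so g = 1 a.e. on C k
    have hsub : ∫⁻ z, (1 - g z) ∂(PZ.restrict (C k)) = 0 := by
      rw [lintegral_sub hgm (by rw [hgint]; exact hPZfin)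
        (Filter.Eventually.of_forall hg1), hgint, lintegral_one,
        Measure.restrict_apply_univ, tsub_self]
    have hae1 : ∀ᵐ z ∂(PZ.restrict (C k)), g z = 1 := by
      have := (lintegral_eq_zero_iff (measurable_const.sub hgm)).1 hsub
      filter_upwards [this] with z hz
      have : (1 : ENNReal) - g z = 0 := hz
      exact le_antisymm (hg1 z) (by
        rcases eq_or_lt_of_le (hg1 z) with h | h
        · exact h.ge
        · exact absurd this (by simp [tsub_eq_zero_iff_le, not_le, h]))
    have haeA : ∀ᵐ z ∂(PZ.restrict (C k)), κ z A = 0 := by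
      filter_upwards [hae1] with z hz
      have h1 : κ z Aᶜ = 1 := le_antisymm prob_le_one (hz ▸ hgle z)
      have hadd : κ z A + κ z Aᶜ = 1 := by
        rw [measure_add_measure_compl (μ := κ z) hAm, measure_univ]
      rw [h1] at hadd
      have h2 : (1:ENNReal) + κ z A = 1 + 0 := by
        rw [add_comm, hadd, add_zero]
      exact (ENNReal.add_right_inj ENNReal.one_ne_top).1 h2
    have haeq : ∀ᵐ z ∂(PZ.restrict (C k)),
        ∀ A : Set Ω, MeasurableSet[ms] A → (κ z A = 0 ↔ P A = 0) :=
      ae_restrict_of_ae hequiv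
    have hne : PZ.restrict (C k) ≠ 0 := by
      intro h
      have := (hCpos k).ne'
      rw [← Measure.restrict_apply_univ, h] at this
      simp at this
    haveI : (ae (PZ.restrict (C k))).NeBot := MeasureTheory.ae_neBot.2 hne
    obtain ⟨z, hz1, hz2⟩ := (haeA.and haeq).exists
    exact (hz2 A hA).1 hz1
  · intro h0
    rw [hint]
    have hae : ∀ᵐ z ∂PZ, κ z A = 0 := by
      filter_upwards [hequiv] with z hz
      exact (hz A hA).2 h0
    calc ∫⁻ z in C k, κ z A ∂PZ = ∫⁻ _ in C k, (0:ENNReal) ∂PZ :=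
          lintegral_congr_ae (ae_restrict_of_ae hae)
      _ = 0 := lintegral_zero
end
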